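/- arXiv:2005.12017 — 3 statements merged into one kernel-verified Lean document; each statement's English description precedes it below -/
import Mathlib

section
/- Suppose Y, A, L are random variables with E[Y | A, L] = E[Y | L] a.s., A is {0,1}-valued, and e(L) = P(A = 1 | L), μ(L) = E[Y | L]. Then for any bounded measurable function q(L), E[q(L)·(Y − μ(L))·(A − e(L))] = 0. -/
open MeasureTheory ProbabilityTheory MeasurableSpace

/-!
Conditioning on `(A, L)`, the residual `Y - E[Y | L]` agrees a.s. with `Y - E[Y | A, L]`, and a
residual of this kind is orthogonal to every bounded `σ(A, L)`-measurable weight. The weight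
`q(L) (A - e(L))` is such a function: `A` is binary, so `A - e(L)` is bounded by `2`.
-/

namespace MeasureTheory

variable {Ω : Type*} {m m₀ : MeasurableSpace Ω} {μ : Measure Ω}

theorem integral_mul_condExp_of_stronglyMeasurable (hm : m ≤ m₀) [SigmaFinite (μ.trim hm)]
    {f g : Ω → ℝ} {C : ℝ} (hg : StronglyMeasurable[m] g) (hg_bdd : ∀ᵐ ω ∂μ, ‖g ω‖ ≤ C)
    (hf : Integrable f μ) :
    ∫ ω, g ω * μ[f | m] ω ∂μ = ∫ ω, g ω * f ω ∂μ := by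
  have hgf : Integrable (g * f) μ := hf.bdd_mul (hg.mono hm).aestronglyMeasurable hg_bdd
  calc ∫ ω, g ω * μ[f | m] ω ∂μ = ∫ ω, μ[g * f | m] ω ∂μ :=
        integral_congr_ae (condExp_mul_of_stronglyMeasurable_left hg hgf hf).symm
    _ = ∫ ω, g ω * f ω ∂μ := integral_condExp hm

theorem integral_mul_sub_condExp_eq_zero (hm : m ≤ m₀) [SigmaFinite (μ.trim hm)]
    {f g : Ω → ℝ} {C : ℝ} (hg : StronglyMeasurable[m] g) (hg_bdd : ∀ᵐ ω ∂μ, ‖g ω‖ ≤ C)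
    (hf : Integrable f μ) :
    ∫ ω, g ω * (f ω - μ[f | m] ω) ∂μ = 0 := by
  have hg_aesm : AEStronglyMeasurable g μ := (hg.mono hm).aestronglyMeasurable
  simp_rw [mul_sub]
  rw [integral_sub (hf.bdd_mul hg_aesm hg_bdd) (integrable_condExp.bdd_mul hg_aesm hg_bdd),
    integral_mul_condExp_of_stronglyMeasurable hm hg hg_bdd hf, sub_self]

theorem ae_abs_sub_condExp_le {f : Ω → ℝ} {R : ℝ} (hf : ∀ᵐ ω ∂μ, |f ω| ≤ R) :
    ∀ᵐ ω ∂μ, |f ω - μ[f | m] ω| ≤ 2 * R := by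
  filter_upwards [hf, ae_bdd_abs_condExp_of_ae_bdd_abs (m := m) hf] with ω hfω hcondω
  linarith [abs_sub (f ω) (μ[f | m] ω)]

end MeasureTheory

theorem stmt1_general {Ω β : Type*} [MeasurableSpace Ω] [MeasurableSpace β]
    (μ : Measure Ω) [IsProbabilityMeasure μ]
    (Y A : Ω → ℝ) (L : Ω → β)
    (hYint : Integrable Y μ) (hAm : Measurable A) (hLm : Measurable L)
    (hAbin : ∀ ω, A ω = 0 ∨ A ω = 1)
    (q : β → ℝ) (hqm : Measurable q) (C : ℝ) (hqC : ∀ b, |q b| ≤ C)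
    (hCE : μ[Y | MeasurableSpace.comap A inferInstance ⊔ MeasurableSpace.comap L inferInstance]
      =ᵐ[μ] μ[Y | MeasurableSpace.comap L inferInstance]) :
    ∫ ω, q (L ω) * (Y ω - (μ[Y | MeasurableSpace.comap L inferInstance]) ω)
      * (A ω - (μ[A | MeasurableSpace.comap L inferInstance]) ω) ∂μ = 0 := by
  have hmAL : MeasurableSpace.comap A inferInstance ⊔ MeasurableSpace.comap L inferInstance
      ≤ ‹MeasurableSpace Ω› := sup_le hAm.comap_le hLm.comap_le
  set mL : MeasurableSpace Ω := MeasurableSpace.comap L inferInstance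
  set mAL : MeasurableSpace Ω := MeasurableSpace.comap A inferInstance ⊔ mL
  set g : Ω → ℝ := fun ω => q (L ω) * (A ω - μ[A | mL] ω)
  have hg : StronglyMeasurable[mAL] g :=
    (hqm.comp (measurable_iff_comap_le.2 le_sup_right)).stronglyMeasurable.mul
      ((measurable_iff_comap_le.2 le_sup_left).stronglyMeasurable.sub
        (stronglyMeasurable_condExp.mono le_sup_right))
  have hA_bdd : ∀ᵐ ω ∂μ, |A ω| ≤ 1 :=
    .of_forall fun ω => by rcases hAbin ω with h | h <;> simp [h]
  have hg_bdd : ∀ᵐ ω ∂μ, ‖g ω‖ ≤ C * (2 * 1) := by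
    filter_upwards [ae_abs_sub_condExp_le (m := mL) hA_bdd] with ω hω
    rw [Real.norm_eq_abs, abs_mul]
    exact mul_le_mul (hqC (L ω)) hω (abs_nonneg _)
      ((abs_nonneg _).trans (hqC (L ω)))
  calc _ = ∫ ω, g ω * (Y ω - μ[Y | mAL] ω) ∂μ := by
        refine integral_congr_ae ?_
        filter_upwards [hCE] with ω hω
        rw [hω]
        ring
    _ = 0 := integral_mul_sub_condExp_eq_zero hmAL hg hg_bdd hYint

/-- Unbiasedness of the g-estimation estimating function at a single time point:
if `E[Y | A, L] = E[Y | L]` a.s., `A` is binary, `e(L) = E[A | L]`, `μ(L) = E[Y | L]`,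
then for any bounded measurable `q`, `E[q(L)(Y − μ(L))(A − e(L))] = 0`. -/
theorem stmt1 {Ω β : Type*} [MeasurableSpace Ω] [MeasurableSpace β]
    (μ : Measure Ω) [IsProbabilityMeasure μ]
    (Y A : Ω → ℝ) (L : Ω → β)
    (hYint : Integrable Y μ) (hYm : Measurable Y) (hAm : Measurable A) (hLm : Measurable L)
    (hAbin : ∀ ω, A ω = 0 ∨ A ω = 1)
    (q : β → ℝ) (hqm : Measurable q) (C : ℝ) (hqC : ∀ b, |q b| ≤ C)
    (hCE : μ[Y | MeasurableSpace.comap A inferInstance ⊔ MeasurableSpace.comap L inferInstance]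
      =ᵐ[μ] μ[Y | MeasurableSpace.comap L inferInstance]) :
    ∫ ω, q (L ω) * (Y ω - (μ[Y | MeasurableSpace.comap L inferInstance]) ω)
      * (A ω - (μ[A | MeasurableSpace.comap L inferInstance]) ω) ∂μ = 0 :=
  stmt1_general μ Y A L hYint hAm hLm hAbin q hqm C hqC hCE
end

section
/- Double robustness (single time point): let Y be integrable, A ∈ {0,1}, L a covariate, with E[Y | A, L] = E[Y | L] a.s. Let ê(L) and μ̂(L) be arbitrary bounded measurable functions of L. If either ê(L) = E[A | L] a.s. or μ̂(L) = E[Y | L] a.s., then E[(Y − μ̂(L))·(A − ê(L))] = 0. -/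
/-!
Conditioning first on `σ(A, L)` and then on `σ(L)` turns the residual product into the product of
the two biases: `E[(Y - μ̂(L))(A - ê(L))] = E[(E[Y | L] - μ̂(L)) (E[A | L] - ê(L))]`, where
conditional mean independence replaces `E[Y | A, L]` by `E[Y | L]`. Either hypothesis makes one
factor vanish almost surely.
-/

open MeasureTheory ProbabilityTheory MeasurableSpace

namespace MeasureTheory

variable {Ω : Type*} {m m' m₀ : MeasurableSpace Ω} {μ : Measure Ω}

theorem integral_mul_condExp_of_aestronglyMeasurable (hm : m ≤ m₀) [SigmaFinite (μ.trim hm)]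
    {f g : Ω → ℝ} (hf : AEStronglyMeasurable[m] f μ) (hfg : Integrable (f * g) μ)
    (hg : Integrable g μ) :
    ∫ ω, f ω * g ω ∂μ = ∫ ω, f ω * μ[g | m] ω ∂μ :=
  (integral_condExp hm).symm.trans
    (integral_congr_ae (condExp_mul_of_aestronglyMeasurable_left hf hfg hg))

theorem condExp_sub_of_aestronglyMeasurable_right (hm : m ≤ m₀) [SigmaFinite (μ.trim hm)]
    {f g : Ω → ℝ} (hf : Integrable f μ) (hg : Integrable g μ) (hgm : AEStronglyMeasurable[m] g μ) :
    μ[f - g | m] =ᵐ[μ] μ[f | m] - g :=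
  (condExp_sub hf hg m).trans (.sub .rfl (condExp_of_aestronglyMeasurable' hm hgm hg))

theorem integral_mul_eq_integral_mul_condExp_of_condExp_ae_eq [IsFiniteMeasure μ]
    (hmm' : m ≤ m') (hm' : m' ≤ m₀) {R D g : Ω → ℝ} {C : ℝ}
    (hR : Integrable R μ) (hD : AEStronglyMeasurable[m'] D μ) (hDC : ∀ᵐ ω ∂μ, ‖D ω‖ ≤ C)
    (hg : AEStronglyMeasurable[m] g μ) (hRg : μ[R | m'] =ᵐ[μ] g) :
    ∫ ω, R ω * D ω ∂μ = ∫ ω, g ω * μ[D | m] ω ∂μ := by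
  have hD₀ : AEStronglyMeasurable D μ := .mono hm' hD
  have hgi : Integrable g μ := integrable_condExp.congr hRg
  have hD_int : Integrable D μ := .of_bound hD₀ C hDC
  calc ∫ ω, R ω * D ω ∂μ = ∫ ω, D ω * R ω ∂μ := by simp only [mul_comm]
    _ = ∫ ω, D ω * μ[R | m'] ω ∂μ :=
        integral_mul_condExp_of_aestronglyMeasurable hm' hD (hR.bdd_mul hD₀ hDC) hR
    _ = ∫ ω, g ω * D ω ∂μ :=
        integral_congr_ae (hRg.mono fun ω h => by simp only [h, mul_comm])
    _ = ∫ ω, g ω * μ[D | m] ω ∂μ :=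
        integral_mul_condExp_of_aestronglyMeasurable (hmm'.trans hm') hg
          (hgi.mul_bdd hD₀ hDC) hD_int

end MeasureTheory

theorem integral_residual_mul_residual_eq_integral_bias_mul_bias {Ω β : Type*}
    [mΩ : MeasurableSpace Ω] [MeasurableSpace β] {μ : Measure Ω} [IsFiniteMeasure μ]
    {Y A : Ω → ℝ} {L : Ω → β} (hY : Integrable Y μ) (hAm : Measurable A) (hLm : Measurable L)
    {CA : ℝ} (hAC : ∀ ω, |A ω| ≤ CA) {ehat muhat : β → ℝ} (hem : Measurable ehat)
    (hmm : Measurable muhat) {Ce Cmu : ℝ} (heC : ∀ b, |ehat b| ≤ Ce) (hmC : ∀ b, |muhat b| ≤ Cmu)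
    (hCE : μ[Y | MeasurableSpace.comap A inferInstance ⊔ MeasurableSpace.comap L inferInstance]
      =ᵐ[μ] μ[Y | MeasurableSpace.comap L inferInstance]) :
    ∫ ω, (Y ω - muhat (L ω)) * (A ω - ehat (L ω)) ∂μ
      = ∫ ω, (μ[Y | MeasurableSpace.comap L inferInstance] ω - muhat (L ω))
          * (μ[A | MeasurableSpace.comap L inferInstance] ω - ehat (L ω)) ∂μ := by
  set mL : MeasurableSpace Ω := MeasurableSpace.comap L inferInstance
  set mAL : MeasurableSpace Ω := MeasurableSpace.comap A inferInstance ⊔ mL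
  have hmL : mL ≤ mAL := le_sup_right
  have hmAL : mAL ≤ mΩ := sup_le hAm.comap_le hLm.comap_le
  have heL : Measurable[mL] (fun ω => ehat (L ω)) := hem.comp (comap_measurable L)
  have hmuL : Measurable[mL] (fun ω => muhat (L ω)) := hmm.comp (comap_measurable L)
  have hA : Integrable A μ := .of_bound hAm.aestronglyMeasurable CA (.of_forall hAC)
  have he : Integrable (fun ω => ehat (L ω)) μ :=
    .of_bound (hem.comp hLm).aestronglyMeasurable Ce (.of_forall fun ω => heC (L ω))
  have hmu : Integrable (fun ω => muhat (L ω)) μ :=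
    .of_bound (hmm.comp hLm).aestronglyMeasurable Cmu (.of_forall fun ω => hmC (L ω))
  have hD : Measurable[mAL] (fun ω => A ω - ehat (L ω)) :=
    (Measurable.of_comap_le le_sup_left).sub (heL.mono hmL le_rfl)
  have hDC : ∀ ω, ‖A ω - ehat (L ω)‖ ≤ CA + Ce :=
    fun ω => (norm_sub_le _ _).trans (add_le_add (hAC ω) (heC (L ω)))
  have hg : Measurable[mL] (fun ω => μ[Y | mL] ω - muhat (L ω)) :=
    stronglyMeasurable_condExp.measurable.sub hmuL
  have hRg : μ[fun ω => Y ω - muhat (L ω) | mAL] =ᵐ[μ] fun ω => μ[Y | mL] ω - muhat (L ω) :=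
    (condExp_sub_of_aestronglyMeasurable_right hmAL hY hmu
      (hmuL.mono hmL le_rfl).aestronglyMeasurable).trans (hCE.sub .rfl)
  have hDm : μ[fun ω => A ω - ehat (L ω) | mL] =ᵐ[μ] fun ω => μ[A | mL] ω - ehat (L ω) :=
    condExp_sub_of_aestronglyMeasurable_right hLm.comap_le hA he heL.aestronglyMeasurable
  calc ∫ ω, (Y ω - muhat (L ω)) * (A ω - ehat (L ω)) ∂μ
      = ∫ ω, (μ[Y | mL] ω - muhat (L ω)) * μ[fun ω => A ω - ehat (L ω) | mL] ω ∂μ :=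
        integral_mul_eq_integral_mul_condExp_of_condExp_ae_eq hmL hmAL (hY.sub hmu)
          hD.aestronglyMeasurable (.of_forall hDC) hg.aestronglyMeasurable hRg
    _ = _ := integral_congr_ae (hDm.mono fun ω h => congrArg _ h)

theorem stmt2_general {Ω β : Type*} [MeasurableSpace Ω] [MeasurableSpace β]
    (μ : Measure Ω) [IsProbabilityMeasure μ]
    (Y A : Ω → ℝ) (L : Ω → β)
    (hYint : Integrable Y μ) (hAm : Measurable A) (hLm : Measurable L)
    (hAbin : ∀ ω, A ω = 0 ∨ A ω = 1)
    (ehat muhat : β → ℝ) (hem : Measurable ehat) (hmm : Measurable muhat)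
    (Ce Cmu : ℝ) (heC : ∀ b, |ehat b| ≤ Ce) (hmC : ∀ b, |muhat b| ≤ Cmu)
    (hCE : μ[Y | MeasurableSpace.comap A inferInstance ⊔ MeasurableSpace.comap L inferInstance]
      =ᵐ[μ] μ[Y | MeasurableSpace.comap L inferInstance])
    (hDR : ((fun ω => ehat (L ω)) =ᵐ[μ] μ[A | MeasurableSpace.comap L inferInstance])
      ∨ ((fun ω => muhat (L ω)) =ᵐ[μ] μ[Y | MeasurableSpace.comap L inferInstance])) :
    ∫ ω, (Y ω - muhat (L ω)) * (A ω - ehat (L ω)) ∂μ = 0 := by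
  have hA : ∀ ω, |A ω| ≤ 1 := fun ω => by rcases hAbin ω with h | h <;> simp [h]
  rw [integral_residual_mul_residual_eq_integral_bias_mul_bias hYint hAm hLm hA hem hmm heC hmC hCE]
  refine integral_eq_zero_of_ae ?_
  rcases hDR with he | hmu
  · filter_upwards [he] with ω hω
    simp [hω]
  · filter_upwards [hmu] with ω hω
    simp [hω]

/-- Double robustness at a single time point: under `E[Y | A, L] = E[Y | L]` a.s., for bounded
measurable working models `ê, μ̂`, if either `ê(L) = E[A | L]` a.s. or `μ̂(L) = E[Y | L]` a.s.,
then `E[(Y − μ̂(L))(A − ê(L))] = 0`. -/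
theorem stmt2 {Ω β : Type*} [MeasurableSpace Ω] [MeasurableSpace β]
    (μ : Measure Ω) [IsProbabilityMeasure μ]
    (Y A : Ω → ℝ) (L : Ω → β)
    (hYint : Integrable Y μ) (hYm : Measurable Y) (hAm : Measurable A) (hLm : Measurable L)
    (hAbin : ∀ ω, A ω = 0 ∨ A ω = 1)
    (ehat muhat : β → ℝ) (hem : Measurable ehat) (hmm : Measurable muhat)
    (Ce Cmu : ℝ) (heC : ∀ b, |ehat b| ≤ Ce) (hmC : ∀ b, |muhat b| ≤ Cmu)
    (hCE : μ[Y | MeasurableSpace.comap A inferInstance ⊔ MeasurableSpace.comap L inferInstance]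
      =ᵐ[μ] μ[Y | MeasurableSpace.comap L inferInstance])
    (hDR : ((fun ω => ehat (L ω)) =ᵐ[μ] μ[A | MeasurableSpace.comap L inferInstance])
      ∨ ((fun ω => muhat (L ω)) =ᵐ[μ] μ[Y | MeasurableSpace.comap L inferInstance])) :
    ∫ ω, (Y ω - muhat (L ω)) * (A ω - ehat (L ω)) ∂μ = 0 :=
  stmt2_general μ Y A L hYint hAm hLm hAbin ehat muhat hem hmm Ce Cmu heC hmC hCE hDR
end

section
/- Optimal weighting minimizes variance: among estimators of ψ* of the form ψ̂_q solving Σᵢ qᵢ(Yᵢ − ψAᵢ − μᵢ)(Aᵢ − eᵢ) = 0 in the model Y = ψ*A + ε with E[ε | A, L] = 0, Var(ε | L) = v(L), A ⫫ ε | L, the asymptotic variance E[q(L)²v(L)e(L)(1−e(L))]/E[q(L)e(L)(1−e(L))]², viewed as a functional of q, is minimized over measurable q > 0 by q(L) ∝ 1/v(L). -/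
/-!
With respect to the weight `w = e(1−e)`, Cauchy–Schwarz gives
`(∫ q w)² ≤ (∫ q² v w) (∫ v⁻¹ w)`, i.e. `V(q) ≥ 1 / ∫ v⁻¹ w`, and `V(1/v)` equals that bound.
The Cauchy–Schwarz step is the nonnegativity, for every `t`, of the quadratic
`∫ (q v − t)² v⁻¹ w = ∫ q² v w − 2 t ∫ q w + t² ∫ v⁻¹ w`.
-/

open MeasureTheory

theorem sq_integral_mul_le_integral_mul_integral_inv {Ω : Type*} [MeasurableSpace Ω]
    {μ : Measure Ω} {f v w : Ω → ℝ} (hv : ∀ ω, 0 < v ω) (hw : ∀ ω, 0 ≤ w ω)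
    (hfvw : Integrable (fun ω => f ω ^ 2 * v ω * w ω) μ)
    (hfw : Integrable (fun ω => f ω * w ω) μ)
    (hvw : Integrable (fun ω => (v ω)⁻¹ * w ω) μ) :
    (∫ ω, f ω * w ω ∂μ) ^ 2
      ≤ (∫ ω, f ω ^ 2 * v ω * w ω ∂μ) * ∫ ω, (v ω)⁻¹ * w ω ∂μ := by
  have quadratic_nonneg : ∀ t : ℝ,
      0 ≤ (∫ ω, (v ω)⁻¹ * w ω ∂μ) * (t * t) + (-2 * ∫ ω, f ω * w ω ∂μ) * t
        + ∫ ω, f ω ^ 2 * v ω * w ω ∂μ := by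
    intro t
    have expand : ∀ ω, (f ω * v ω - t) ^ 2 * (v ω)⁻¹ * w ω
        = f ω ^ 2 * v ω * w ω - 2 * t * (f ω * w ω) + t ^ 2 * ((v ω)⁻¹ * w ω) := by
      intro ω
      field_simp [(hv ω).ne']
      ring
    have hint : ∫ ω, (f ω * v ω - t) ^ 2 * (v ω)⁻¹ * w ω ∂μ
        = ∫ ω, f ω ^ 2 * v ω * w ω ∂μ - 2 * t * ∫ ω, f ω * w ω ∂μ
          + t ^ 2 * ∫ ω, (v ω)⁻¹ * w ω ∂μ := by
      have hdiff : Integrable (fun ω => f ω ^ 2 * v ω * w ω - 2 * t * (f ω * w ω)) μ :=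
        hfvw.sub (hfw.const_mul _)
      simp_rw [expand]
      rw [integral_add hdiff (hvw.const_mul _),
        integral_sub hfvw (hfw.const_mul _), integral_const_mul, integral_const_mul]
    have hnonneg : 0 ≤ ∫ ω, (f ω * v ω - t) ^ 2 * (v ω)⁻¹ * w ω ∂μ :=
      integral_nonneg fun ω => by have := (hv ω).le; have := hw ω; positivity
    linarith
  have hdiscrim := discrim_le_zero quadratic_nonneg
  rw [discrim] at hdiscrim
  linarith

theorem stmt11_general {Ω : Type*} [MeasurableSpace Ω]
    (μ : Measure Ω)
    (v e q : Ω → ℝ)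
    (hv : ∀ ω, 0 < v ω) (he : ∀ ω, 0 < e ω ∧ e ω < 1)
    (hint1 : Integrable (fun ω => q ω ^ 2 * v ω * (e ω * (1 - e ω))) μ)
    (hint2 : Integrable (fun ω => q ω * (e ω * (1 - e ω))) μ)
    (hint3 : Integrable (fun ω => (v ω)⁻¹ * (e ω * (1 - e ω))) μ)
    (hpos1 : 0 < ∫ ω, q ω * (e ω * (1 - e ω)) ∂μ)
    (hpos2 : 0 < ∫ ω, (v ω)⁻¹ * (e ω * (1 - e ω)) ∂μ) :
    (∫ ω, ((v ω)⁻¹) ^ 2 * v ω * (e ω * (1 - e ω)) ∂μ)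
        / (∫ ω, (v ω)⁻¹ * (e ω * (1 - e ω)) ∂μ) ^ 2
      ≤ (∫ ω, q ω ^ 2 * v ω * (e ω * (1 - e ω)) ∂μ)
        / (∫ ω, q ω * (e ω * (1 - e ω)) ∂μ) ^ 2 := by
  have hw : ∀ ω, 0 ≤ e ω * (1 - e ω) := fun ω =>
    mul_nonneg (he ω).1.le (sub_nonneg.mpr (he ω).2.le)
  have optimal_integrand : ∀ ω, ((v ω)⁻¹) ^ 2 * v ω * (e ω * (1 - e ω))
      = (v ω)⁻¹ * (e ω * (1 - e ω)) := fun ω => by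
    field_simp [(hv ω).ne']
  have cauchy_schwarz :=
    sq_integral_mul_le_integral_mul_integral_inv (μ := μ) hv hw hint1 hint2 hint3
  simp_rw [optimal_integrand]
  rw [div_le_div_iff₀ (by positivity) (by positivity)]
  nlinarith

/-- Optimal weighting minimizes the asymptotic variance: for the variance functional
`V(q) = E[q² v e(1−e)] / E[q e(1−e)]²` with conditional outcome variance `v > 0` and propensity
`e ∈ (0,1)`, the choice `q = 1/v` minimizes `V` over positive measurable weights `q`,
i.e. `V(1/v) ≤ V(q)`. -/
theorem stmt11 {Ω : Type*} [MeasurableSpace Ω]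
    (μ : Measure Ω) [IsProbabilityMeasure μ]
    (v e q : Ω → ℝ)
    (hvm : Measurable v) (hem : Measurable e) (hqm : Measurable q)
    (hv : ∀ ω, 0 < v ω) (he : ∀ ω, 0 < e ω ∧ e ω < 1) (hq : ∀ ω, 0 < q ω)
    (hint1 : Integrable (fun ω => q ω ^ 2 * v ω * (e ω * (1 - e ω))) μ)
    (hint2 : Integrable (fun ω => q ω * (e ω * (1 - e ω))) μ)
    (hint3 : Integrable (fun ω => (v ω)⁻¹ * (e ω * (1 - e ω))) μ)
    (hpos1 : 0 < ∫ ω, q ω * (e ω * (1 - e ω)) ∂μ)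
    (hpos2 : 0 < ∫ ω, (v ω)⁻¹ * (e ω * (1 - e ω)) ∂μ) :
    (∫ ω, ((v ω)⁻¹) ^ 2 * v ω * (e ω * (1 - e ω)) ∂μ)
        / (∫ ω, (v ω)⁻¹ * (e ω * (1 - e ω)) ∂μ) ^ 2
      ≤ (∫ ω, q ω ^ 2 * v ω * (e ω * (1 - e ω)) ∂μ)
        / (∫ ω, q ω * (e ω * (1 - e ω)) ∂μ) ^ 2 :=
  stmt11_general μ v e q hv he hint1 hint2 hint3 hpos1 hpos2
end
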